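/- Let θ > 0 irrational with convergents p_n/q_n, and assume the elements a_n → ∞. Let T_n = log((p_nθ + q_n)/|q_nθ - p_n|) and l_{T_n}² = 2(q_n + p_nθ)|q_nθ - p_n|/(1+θ²). Then l_{T_n}²·a_{n+1} → 2 as n → ∞, i.e. l_{T_n}² ≈ 2/a_{n+1}. -/

import Mathlib

/-- Data of the continued fraction expansion of `θ`: elements `a`, complete
quotients `x`, and convergents `p n / q n` given by the standard recursions. -/
structure CFData (θ : ℝ) where
  a : ℕ → ℤ
  x : ℕ → ℝ
  p : ℕ → ℤ
  q : ℕ → ℤ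
  x_zero : x 0 = θ
  a_floor : ∀ n, a n = ⌊x n⌋
  x_succ : ∀ n, x (n + 1) = 1 / (x n - a n)
  p_zero : p 0 = a 0
  q_zero : q 0 = 1
  p_one : p 1 = a 1 * a 0 + 1
  q_one : q 1 = a 1
  p_rec : ∀ n, p (n + 2) = a (n + 2) * p (n + 1) + p n
  q_rec : ∀ n, q (n + 2) = a (n + 2) * q (n + 1) + q n

/-!
The error of the `n`-th convergent is `q n * θ - p n = (-1)^n / (x (n+1) * q n + q (n-1))`,
where `x (n+1) ∈ [a (n+1), a (n+1) + 1)` is the complete quotient and `0 ≤ q (n-1) ≤ q n`.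
Hence `a (n+1) * q n * |q n * θ - p n|` lies between `1 - 2 / a (n+1)` and `1`, so it tends
to `1` when `a n → ∞`, while
`(q n + p n * θ) / q n = 1 + θ^2 - θ * (q n * θ - p n) / q n` tends to `1 + θ^2`.
-/

open Filter Topology

namespace CFData

variable {θ : ℝ} (c : CFData θ)

/-- `pPrev n = p (n-1)`, with the usual convention `p (-1) = 1`. -/
def pPrev : ℕ → ℤ
  | 0 => 1
  | n + 1 => c.p n

/-- `qPrev n = q (n-1)`, with the usual convention `q (-1) = 0`. -/
def qPrev : ℕ → ℤ
  | 0 => 0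
  | n + 1 => c.q n

theorem p_succ (n : ℕ) : c.p (n + 1) = c.a (n + 1) * c.p n + c.pPrev n := by
  cases n with
  | zero => simp [pPrev, c.p_zero, c.p_one]
  | succ n => simpa [pPrev] using c.p_rec n

theorem q_succ (n : ℕ) : c.q (n + 1) = c.a (n + 1) * c.q n + c.qPrev n := by
  cases n with
  | zero => simp [qPrev, c.q_zero, c.q_one]
  | succ n => simpa [qPrev] using c.q_rec n

theorem q_mul_pPrev_sub_p_mul_qPrev (n : ℕ) :
    c.q n * c.pPrev n - c.p n * c.qPrev n = (-1) ^ n := by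
  induction n with
  | zero => simp [pPrev, qPrev, c.q_zero]
  | succ n ih =>
    change c.q (n + 1) * c.p n - c.p (n + 1) * c.q n = (-1) ^ (n + 1)
    rw [c.q_succ, c.p_succ, pow_succ, ← ih]
    ring

theorem a_le_x (n : ℕ) : (c.a n : ℝ) ≤ c.x n := by
  rw [c.a_floor]
  exact Int.floor_le _

theorem x_lt_a_add_one (n : ℕ) : c.x n < c.a n + 1 := by
  rw [c.a_floor]
  exact Int.lt_floor_add_one _

theorem irrational_x (hirr : Irrational θ) (n : ℕ) : Irrational (c.x n) := by
  induction n with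
  | zero => rwa [c.x_zero]
  | succ n ih =>
    rw [c.x_succ, one_div]
    exact (ih.sub_intCast _).inv

theorem x_sub_a_pos (hirr : Irrational θ) (n : ℕ) : 0 < c.x n - c.a n := by
  have h := c.a_le_x n
  have hne : c.x n ≠ c.a n := (c.irrational_x hirr n).ne_int _
  exact sub_pos.2 (lt_of_le_of_ne h hne.symm)

theorem x_succ_mul_x_sub_a (hirr : Irrational θ) (n : ℕ) :
    c.x (n + 1) * (c.x n - c.a n) = 1 := by
  rw [c.x_succ]
  exact one_div_mul_cancel (c.x_sub_a_pos hirr n).ne'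

theorem one_le_a_succ (hirr : Irrational θ) (n : ℕ) : 1 ≤ c.a (n + 1) := by
  have hpos := c.x_sub_a_pos hirr n
  have hlt := c.x_lt_a_add_one n
  have hx : 1 ≤ c.x (n + 1) := by
    rw [c.x_succ, le_div_iff₀ hpos]
    linarith
  rw [c.a_floor]
  exact Int.le_floor.2 (by exact_mod_cast hx)

theorem qPrev_nonneg_and_le_q (hirr : Irrational θ) (n : ℕ) :
    0 ≤ c.qPrev n ∧ c.qPrev n ≤ c.q n := by
  induction n with
  | zero => simp [qPrev, c.q_zero]
  | succ n ih =>
    obtain ⟨h0, hle⟩ := ih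
    have ha := c.one_le_a_succ hirr n
    change 0 ≤ c.q n ∧ c.q n ≤ c.q (n + 1)
    rw [c.q_succ]
    constructor <;> nlinarith

theorem one_le_q (hirr : Irrational θ) (n : ℕ) : 1 ≤ c.q n := by
  have hmono : Monotone c.q := monotone_nat_of_le_succ fun n =>
    (c.qPrev_nonneg_and_le_q hirr (n + 1)).2
  simpa [c.q_zero] using hmono (Nat.zero_le n)

/-- `θ` is the Möbius image of the complete quotient `x (n+1)` under the `n`-th convergent
matrix. -/
theorem theta_mul_denom_eq (hirr : Irrational θ) (n : ℕ) :
    θ * (c.x (n + 1) * c.q n + c.qPrev n) = c.x (n + 1) * c.p n + c.pPrev n := by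
  induction n with
  | zero =>
    have h := c.x_succ_mul_x_sub_a hirr 0
    rw [c.x_zero] at h
    simp only [pPrev, qPrev, c.p_zero, c.q_zero]
    push_cast
    linear_combination h
  | succ n ih =>
    have hinv := c.x_succ_mul_x_sub_a hirr (n + 1)
    have hq : (c.q (n + 1) : ℝ) = c.a (n + 1) * c.q n + c.qPrev n := by
      exact_mod_cast c.q_succ n
    have hp : (c.p (n + 1) : ℝ) = c.a (n + 1) * c.p n + c.pPrev n := by
      exact_mod_cast c.p_succ n
    change θ * (c.x (n + 2) * c.q (n + 1) + (c.q n : ℝ)) = c.x (n + 2) * c.p (n + 1) + c.p n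
    rw [hq, hp]
    linear_combination c.x (n + 2) * ih - (θ * c.q n - c.p n) * hinv

theorem a_succ_mul_q_le_denom (hirr : Irrational θ) (n : ℕ) :
    (c.a (n + 1) : ℝ) * c.q n ≤ c.x (n + 1) * c.q n + c.qPrev n := by
  have hq : (0 : ℝ) ≤ c.q n := by exact_mod_cast (zero_le_one.trans (c.one_le_q hirr n))
  have hqPrev : (0 : ℝ) ≤ c.qPrev n := by exact_mod_cast (c.qPrev_nonneg_and_le_q hirr n).1
  nlinarith [c.a_le_x (n + 1)]

theorem denom_le (hirr : Irrational θ) (n : ℕ) :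
    c.x (n + 1) * c.q n + c.qPrev n ≤ (c.a (n + 1) + 2) * c.q n := by
  have hq : (0 : ℝ) ≤ c.q n := by exact_mod_cast (zero_le_one.trans (c.one_le_q hirr n))
  have hqPrev : (c.qPrev n : ℝ) ≤ c.q n := by
    exact_mod_cast (c.qPrev_nonneg_and_le_q hirr n).2
  nlinarith [c.x_lt_a_add_one (n + 1)]

theorem denom_pos (hirr : Irrational θ) (n : ℕ) : 0 < c.x (n + 1) * c.q n + c.qPrev n := by
  have ha : (1 : ℝ) ≤ c.a (n + 1) := by exact_mod_cast c.one_le_a_succ hirr n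
  have hq : (1 : ℝ) ≤ c.q n := by exact_mod_cast c.one_le_q hirr n
  nlinarith [c.a_succ_mul_q_le_denom hirr n]

theorem abs_q_mul_sub_p (hirr : Irrational θ) (n : ℕ) :
    |c.q n * θ - c.p n| = (c.x (n + 1) * c.q n + c.qPrev n)⁻¹ := by
  have hD := c.denom_pos hirr n
  have hdet : (c.q n : ℝ) * c.pPrev n - c.p n * c.qPrev n = (-1) ^ n := by
    exact_mod_cast c.q_mul_pPrev_sub_p_mul_qPrev n
  have hmul : (c.q n * θ - c.p n) * (c.x (n + 1) * c.q n + c.qPrev n) = (-1) ^ n := by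
    linear_combination (c.q n : ℝ) * c.theta_mul_denom_eq hirr n + hdet
  have he : c.q n * θ - c.p n = (-1) ^ n * (c.x (n + 1) * c.q n + c.qPrev n)⁻¹ := by
    rw [← hmul, mul_inv_cancel_right₀ hD.ne']
  rw [he, abs_mul, abs_pow, abs_neg, abs_one, one_pow, one_mul, abs_of_pos (inv_pos.2 hD)]

theorem a_succ_mul_q_mul_abs_le_one (hirr : Irrational θ) (n : ℕ) :
    (c.a (n + 1) : ℝ) * c.q n * |c.q n * θ - c.p n| ≤ 1 := by
  rw [c.abs_q_mul_sub_p hirr, ← div_eq_mul_inv, div_le_one (c.denom_pos hirr n)]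
  exact c.a_succ_mul_q_le_denom hirr n

theorem one_sub_two_div_le_a_succ_mul_q_mul_abs (hirr : Irrational θ) (n : ℕ) :
    1 - 2 / (c.a (n + 1) : ℝ) ≤ c.a (n + 1) * c.q n * |c.q n * θ - c.p n| := by
  rw [c.abs_q_mul_sub_p hirr, ← div_eq_mul_inv]
  have hD := c.denom_pos hirr n
  have haqD := c.a_succ_mul_q_le_denom hirr n
  have hDaq := c.denom_le hirr n
  set D := c.x (n + 1) * c.q n + c.qPrev n
  have hq : (0 : ℝ) < c.q n := by exact_mod_cast zero_lt_one.trans_le (c.one_le_q hirr n)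
  have ha : (0 : ℝ) < c.a (n + 1) := by
    exact_mod_cast zero_lt_one.trans_le (c.one_le_a_succ hirr n)
  have hrel : 1 - c.a (n + 1) * c.q n / D ≤ 2 / (c.a (n + 1) : ℝ) :=
    calc _ = (D - c.a (n + 1) * c.q n) / D := by rw [sub_div, div_self hD.ne']
      _ ≤ 2 * c.q n / (c.a (n + 1) * c.q n) :=
        div_le_div₀ (by positivity) (by linarith) (by positivity) haqD
      _ = 2 / (c.a (n + 1) : ℝ) := mul_div_mul_right _ _ hq.ne'
  linarith

theorem tendsto_a_succ_mul_q_mul_abs (hirr : Irrational θ)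
    (ha : Tendsto (fun n : ℕ => (c.a n : ℝ)) atTop atTop) :
    Tendsto (fun n => (c.a (n + 1) : ℝ) * c.q n * |c.q n * θ - c.p n|) atTop (𝓝 1) := by
  have ha' : Tendsto (fun n => (c.a (n + 1) : ℝ)) atTop atTop := ha.comp (tendsto_add_atTop_nat 1)
  have hlow : Tendsto (fun n => 1 - 2 / (c.a (n + 1) : ℝ)) atTop (𝓝 1) := by
    simpa using tendsto_const_nhds.sub (tendsto_const_nhds.div_atTop ha')
  exact tendsto_of_tendsto_of_tendsto_of_le_of_le hlow tendsto_const_nhds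
    (c.one_sub_two_div_le_a_succ_mul_q_mul_abs hirr) (c.a_succ_mul_q_mul_abs_le_one hirr)

theorem tendsto_q_mul_sub_p_div_q (hirr : Irrational θ)
    (ha : Tendsto (fun n : ℕ => (c.a n : ℝ)) atTop atTop) :
    Tendsto (fun n => (c.q n * θ - c.p n) / c.q n) atTop (𝓝 0) := by
  have ha' : Tendsto (fun n => (c.a (n + 1) : ℝ)) atTop atTop := ha.comp (tendsto_add_atTop_nat 1)
  refine squeeze_zero_norm (fun n => ?_) (tendsto_inv_atTop_zero.comp ha')
  have ha1 : (1 : ℝ) ≤ c.a (n + 1) := by exact_mod_cast c.one_le_a_succ hirr n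
  have hq1 : (1 : ℝ) ≤ c.q n := by exact_mod_cast c.one_le_q hirr n
  have hle := c.a_succ_mul_q_mul_abs_le_one hirr n
  calc ‖(c.q n * θ - c.p n) / c.q n‖ = |c.q n * θ - c.p n| / c.q n := by
        rw [Real.norm_eq_abs, abs_div, abs_of_pos (a := (c.q n : ℝ)) (by linarith)]
    _ ≤ |c.q n * θ - c.p n| := div_le_self (abs_nonneg _) hq1
    _ ≤ (c.a (n + 1) : ℝ)⁻¹ := by
        rw [← one_div, le_div_iff₀ (by linarith)]
        nlinarith [abs_nonneg (c.q n * θ - c.p n)]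

end CFData

theorem stmt_16_general (θ : ℝ) (hirr : Irrational θ) (c : CFData θ)
    (ha : Filter.Tendsto (fun n : ℕ => (c.a n : ℝ)) Filter.atTop Filter.atTop) :
    Filter.Tendsto (fun n : ℕ =>
        (2 * ((c.q n : ℝ) + (c.p n : ℝ) * θ) * |(c.q n : ℝ) * θ - c.p n| / (1 + θ ^ 2)) *
          (c.a (n + 1) : ℝ))
      Filter.atTop (nhds 2) := by
  have hθ2 : (1 : ℝ) + θ ^ 2 ≠ 0 := by positivity
  have herr := (c.tendsto_q_mul_sub_p_div_q hirr ha).const_mul θ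
  have h := ((tendsto_const_nhds (x := 1 + θ ^ 2)).sub herr |>.mul
    (c.tendsto_a_succ_mul_q_mul_abs hirr ha)).const_mul (2 / (1 + θ ^ 2))
  rw [mul_zero, sub_zero, mul_one, div_mul_cancel₀ _ hθ2] at h
  refine h.congr fun n => ?_
  have hq : (c.q n : ℝ) ≠ 0 := by exact_mod_cast (zero_lt_one.trans_le (c.one_le_q hirr n)).ne'
  field_simp
  ring

theorem stmt_16 (θ : ℝ) (hθ : 0 < θ) (hirr : Irrational θ) (c : CFData θ)
    (ha : Filter.Tendsto (fun n : ℕ => (c.a n : ℝ)) Filter.atTop Filter.atTop) :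
    Filter.Tendsto (fun n : ℕ =>
        (2 * ((c.q n : ℝ) + (c.p n : ℝ) * θ) * |(c.q n : ℝ) * θ - c.p n| / (1 + θ ^ 2)) *
          (c.a (n + 1) : ℝ))
      Filter.atTop (nhds 2) :=
  stmt_16_general θ hirr c ha
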